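/- Let n, a, b be positive integers with a + b < n and b > n/2. For every integer i with 0 ≤ i ≤ 2b−n+1, |F_i(n,a,b)| = C(n−1−i, b−i)·C(b−i, a) + C(n−b+a−1, a−1)·(C(n, b−a) − C(n−i, b−a−i)), where C(·,·) denotes the binomial coefficient. -/

import Mathlib

open Finset

/-- `Iv n` is the set `[n] = {1, …, n}` as a finset of naturals (with `Iv 0 = ∅`). -/
def Iv (n : ℕ) : Finset ℕ := Finset.Icc 1 n

/-- `f` is a flag of the ground set `[n]`: a set of nonempty proper subsets of `[n]`
that is totally ordered by inclusion. -/
def IsFlag (n : ℕ) (f : Finset (Finset ℕ)) : Prop :=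
  (∀ A ∈ f, A.Nonempty ∧ A ⊆ Iv n ∧ A ≠ Iv n) ∧
  ∀ A ∈ f, ∀ B ∈ f, A ⊆ B ∨ B ⊆ A

/-- The type of a flag: the set of cardinalities of its members. -/
def flagType (f : Finset (Finset ℕ)) : Finset ℕ := f.image Finset.card

/-- The vertices of `Γ(n, T)`: flags of `[n]` of type `T`. -/
def FlagV (n : ℕ) (T : Finset ℕ) : Type :=
  {f : Finset (Finset ℕ) // IsFlag n f ∧ flagType f = T}

/-- Two flags of `[n]` are in general position. -/
def GenPos (n : ℕ) (f g : Finset (Finset ℕ)) : Prop :=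
  ∀ A ∈ f, ∀ B ∈ g, A ∩ B = ∅ ∨ A ∪ B = Iv n

/-- The graph `Γ(n, T)` on the flags of `[n]` of type `T`, two distinct flags being
adjacent iff they are in general position. -/
def flagGraph (n : ℕ) (T : Finset ℕ) : SimpleGraph (FlagV n T) where
  Adj f g := f ≠ g ∧ GenPos n f.1 g.1
  symm := by
    constructor
    rintro f g ⟨hne, h⟩
    refine ⟨hne.symm, fun A hA B hB => ?_⟩
    rcases h B hB A hA with h' | h'
    · exact Or.inl (by rwa [Finset.inter_comm])
    · exact Or.inr (by rwa [Finset.union_comm])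
  loopless := ⟨fun f h => h.1 rfl⟩

/-- A set of vertices is independent: pairwise nonadjacent. -/
def IsIndep {V : Type*} (G : SimpleGraph V) (s : Set V) : Prop :=
  ∀ ⦃u⦄, u ∈ s → ∀ ⦃v⦄, v ∈ s → ¬ G.Adj u v

/-- A maximal independent set: independent, and no vertex can be added to it
keeping it independent. -/
def IsMaxIndep {V : Type*} (G : SimpleGraph V) (s : Set V) : Prop :=
  IsIndep G s ∧ ∀ v ∉ s, ¬ IsIndep G (insert v s)

/-- The independence number of a graph: the largest cardinality of an independent set. -/
noncomputable def indepNum {V : Type*} (G : SimpleGraph V) : ℕ :=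
  sSup {k | ∃ s : Set V, IsIndep G s ∧ s.ncard = k}

/-- Two sets of vertices are equivalent when some automorphism of the graph maps
one onto the other. -/
def EquivIndep {V : Type*} (G : SimpleGraph V) (s t : Set V) : Prop :=
  ∃ φ : G ≃g G, ⇑φ '' s = t

/-- The projection of a flag to the sub-type `S`: keep only the members whose
cardinality lies in `S`. -/
def projFlag (S : Finset ℕ) (f : Finset (Finset ℕ)) : Finset (Finset ℕ) :=
  f.filter (fun A => A.card ∈ S)

/-- Condition (I) of Example 3.1: `[i] ⊆ B ⊆ [n-1]`. -/
def condI (n i : ℕ) (B : Finset ℕ) : Prop := Iv i ⊆ B ∧ B ⊆ Iv (n - 1)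

/-- Condition (II) of Example 3.1: `min A ≤ i` and `[min A] ⊆ B`. -/
def condII (i : ℕ) (A B : Finset ℕ) : Prop :=
  ∃ j ∈ A, (∀ k ∈ A, j ≤ k) ∧ j ≤ i ∧ Iv j ⊆ B

/-- The set `F_i(n,a,b)` of flags `(A,B)` of `[n]` of type `{a,b}` satisfying
condition (I) or condition (II). -/
def Fi (n a b i : ℕ) : Set (FlagV n {a, b}) :=
  {f | ∃ A B : Finset ℕ, A ∈ f.1 ∧ B ∈ f.1 ∧ A.card = a ∧ B.card = b ∧
        (condI n i B ∨ condII i A B)}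

/-- The set `bar F_i(n,a,b)` for `i = 2b-n+1`: flags `(A,B)` of type `{a,b}` with
`[i] ⊆ B` or condition (II). -/
def FiBar (n a b : ℕ) : Set (FlagV n {a, b}) :=
  {f | ∃ A B : Finset ℕ, A ∈ f.1 ∧ B ∈ f.1 ∧ A.card = a ∧ B.card = b ∧
        (Iv (2 * b - n + 1) ⊆ B ∨ condII (2 * b - n + 1) A B)}

/-- The rational number `i₀ = b - 1 - (n-b)(n-b-1)/a`. -/
def izero (n a b : ℕ) : ℚ :=
  (b : ℚ) - 1 - ((n : ℚ) - b) * ((n : ℚ) - b - 1) / a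

/-- The index `i = max{0, ⌈i₀⌉}`. -/
def iDef (n a b : ℕ) : ℕ := (max 0 ⌈izero n a b⌉).toNat

/-- `f(n,a,b)`: the largest cardinality of the sets `F_j(n,a,b)`, `0 ≤ j ≤ 2b-n+1`. -/
noncomputable def fMax (n a b : ℕ) : ℕ :=
  (Finset.range (2 * b - n + 2)).sup (fun j => (Fi n a b j).ncard)

/-- An independent set of `Γ(n,{a,b})` is of standard type if it has cardinality
`f(n,a,b)` and some automorphism of the graph maps it onto one of the sets of
Example 3.1. -/
noncomputable def IsStandardType (n a b : ℕ) (F : Set (FlagV n {a, b})) : Prop :=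
  F.ncard = fMax n a b ∧
  ∃ φ : flagGraph n {a, b} ≃g flagGraph n {a, b},
    (∃ j ≤ 2 * b - n + 1, ⇑φ '' F = Fi n a b j) ∨ ⇑φ '' F = FiBar n a b

open scoped Classical

/- ## auxiliary lemmas -/

lemma card_Iv (n : ℕ) : (Iv n).card = n := by simp [Iv]

lemma mem_Iv {k n : ℕ} : k ∈ Iv n ↔ 1 ≤ k ∧ k ≤ n := by simp [Iv]

lemma Iv_subset_Iv {m n : ℕ} (h : m ≤ n) : Iv m ⊆ Iv n :=
  Finset.Icc_subset_Icc_right h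

lemma sigma_powersetCard_card (s : Finset ℕ) (q p : ℕ) :
    ((s.powersetCard q).sigma (fun D => (s \ D).powersetCard p)).card
      = s.card.choose q * (s.card - q).choose p := by
  rw [Finset.card_sigma]
  rw [Finset.sum_congr rfl (fun D hD => ?_), Finset.sum_const, Finset.card_powersetCard,
    smul_eq_mul]
  rw [Finset.card_powersetCard, Finset.card_sdiff_of_subset (Finset.mem_powersetCard.mp hD).1,
    (Finset.mem_powersetCard.mp hD).2]

lemma sigma_powersetCard_card' (s : Finset ℕ) (q p : ℕ) :
    ((s.powersetCard q).sigma (fun D => D.powersetCard p)).card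
      = s.card.choose q * q.choose p := by
  rw [Finset.card_sigma]
  rw [Finset.sum_congr rfl (fun D hD => ?_), Finset.sum_const, Finset.card_powersetCard,
    smul_eq_mul]
  rw [Finset.card_powersetCard, (Finset.mem_powersetCard.mp hD).2]

lemma telescope (n m : ℕ) (hmn : m ≤ n) :
    ∀ i, i ≤ m → (∑ j ∈ Finset.Icc 1 i, (n - j).choose (m + 1 - j)) + (n - i).choose (m - i)
      = n.choose m := by
  intro i
  induction i with
  | zero => simp
  | succ i ih =>
    intro hi
    rw [Finset.sum_Icc_succ_top (by omega)]
    have h1 : (n - i).choose (m - i) = (n - (i+1)).choose (m - (i+1)) + (n - (i+1)).choose (m + 1 - (i+1)) := by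
      have e1 : n - i = (n - (i+1)) + 1 := by omega
      rw [e1]
      have e2 : m - i = (m - (i+1)) + 1 := by omega
      rw [e2, Nat.choose_succ_succ]
      congr 1
      congr 1
      omega
    have := ih (by omega)
    omega

/- ## flag structure -/

lemma flag_struct {n a b : ℕ} (hab : a < b) (f : FlagV n {a, b}) :
    ∃ A B : Finset ℕ, f.1 = {A, B} ∧ A ⊆ B ∧ A.card = a ∧ B.card = b := by
  obtain ⟨hF, hT⟩ := f.2
  have ha : a ∈ flagType f.1 := by rw [hT]; simp
  have hb : b ∈ flagType f.1 := by rw [hT]; simp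
  obtain ⟨A, hA, hAc⟩ := Finset.mem_image.mp ha
  obtain ⟨B, hB, hBc⟩ := Finset.mem_image.mp hb
  have hsub : A ⊆ B := by
    rcases hF.2 A hA B hB with h | h
    · exact h
    · exact absurd (Finset.card_le_card h) (by omega)
  refine ⟨A, B, ?_, hsub, hAc, hBc⟩
  apply Finset.Subset.antisymm
  · intro X hX
    have : X.card ∈ flagType f.1 := Finset.mem_image_of_mem _ hX
    rw [hT] at this
    simp only [Finset.mem_insert, Finset.mem_singleton] at this ⊢
    rcases this with h | h
    · left
      rcases hF.2 X hX A hA with hs | hs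
      · exact Finset.eq_of_subset_of_card_le hs (by omega)
      · exact (Finset.eq_of_subset_of_card_le hs (by omega)).symm
    · right
      rcases hF.2 X hX B hB with hs | hs
      · exact Finset.eq_of_subset_of_card_le hs (by omega)
      · exact (Finset.eq_of_subset_of_card_le hs (by omega)).symm
  · intro X hX
    simp only [Finset.mem_insert, Finset.mem_singleton] at hX
    rcases hX with rfl | rfl <;> assumption

lemma mk_flag {n a b : ℕ} (ha : 0 < a) (hab : a < b) (hbn : b < n) {A B : Finset ℕ}
    (hAB : A ⊆ B) (hBn : B ⊆ Iv n) (hAc : A.card = a) (hBc : B.card = b) :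
    IsFlag n {A, B} ∧ flagType {A, B} = ({a, b} : Finset ℕ) := by
  have hmem : ∀ X ∈ ({A, B} : Finset (Finset ℕ)), X = A ∨ X = B := by
    intro X hX; simpa using hX
  constructor
  · constructor
    · intro X hX
      rcases hmem X hX with rfl | rfl
      · exact ⟨Finset.card_pos.mp (by omega), hAB.trans hBn,
          fun h => by rw [h, card_Iv] at hAc; omega⟩
      · exact ⟨Finset.card_pos.mp (by omega), hBn,
          fun h => by rw [h, card_Iv] at hBc; omega⟩
    · intro X hX Y hY
      rcases hmem X hX with rfl | rfl <;> rcases hmem Y hY with rfl | rfl <;>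
        simp [hAB]
  · rw [flagType, Finset.image_insert, Finset.image_singleton, hAc, hBc]

/- ## the pair model -/

noncomputable def pairSet (n a b i : ℕ) : Finset (Finset ℕ × Finset ℕ) :=
  ((Iv n).powerset ×ˢ (Iv n).powerset).filter
    (fun p => p.1 ⊆ p.2 ∧ p.1.card = a ∧ p.2.card = b ∧
      (condI n i p.2 ∨ condII i p.1 p.2))

lemma mem_pairSet {n a b i : ℕ} {p : Finset ℕ × Finset ℕ} :
    p ∈ pairSet n a b i ↔ p.2 ⊆ Iv n ∧ p.1 ⊆ p.2 ∧ p.1.card = a ∧ p.2.card = b ∧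
      (condI n i p.2 ∨ condII i p.1 p.2) := by
  unfold pairSet
  simp only [Finset.mem_filter, Finset.mem_product, Finset.mem_powerset]
  constructor
  · rintro ⟨⟨_, h2⟩, h⟩; exact ⟨h2, h⟩
  · rintro ⟨h2, hsub, h⟩; exact ⟨⟨hsub.trans h2, h2⟩, hsub, h⟩

noncomputable def gmap (n a b : ℕ) (f : FlagV n {a, b}) : Finset ℕ × Finset ℕ :=
  ((f.1.filter (fun X => X.card = a)).sup id, (f.1.filter (fun X => X.card = b)).sup id)

lemma gmap_eq {n a b : ℕ} (hab : a ≠ b) {f : FlagV n {a, b}} {A B : Finset ℕ}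
    (hf : f.1 = {A, B}) (hA : A.card = a) (hB : B.card = b) :
    gmap n a b f = (A, B) := by
  have h1 : f.1.filter (fun X => X.card = a) = {A} := by
    rw [hf, Finset.filter_insert, if_pos hA, Finset.filter_singleton,
      if_neg (by rw [hB]; exact fun h => hab h.symm)]
    simp
  have h2 : f.1.filter (fun X => X.card = b) = {B} := by
    rw [hf, Finset.filter_insert, if_neg (by rw [hA]; exact hab), Finset.filter_singleton,
      if_pos hB]
  simp [gmap, h1, h2]

lemma ncard_Fi {n a b i : ℕ} (ha : 0 < a) (hab : a < b) (hbn : b < n) :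
    (Fi n a b i).ncard = (pairSet n a b i).card := by
  have himg : gmap n a b '' (Fi n a b i) = ↑(pairSet n a b i) := by
    ext p
    simp only [Set.mem_image, Finset.coe_sort_coe, Finset.mem_coe]
    constructor
    · rintro ⟨f, hf, rfl⟩
      obtain ⟨A, B, hfAB, hsub, hAc, hBc⟩ := flag_struct hab f
      rw [gmap_eq hab.ne hfAB hAc hBc]
      obtain ⟨A', B', hA', hB', hA'c, hB'c, hcond⟩ := hf
      have hBIv : B ⊆ Iv n := (f.2.1.1 B (by rw [hfAB]; simp)).2.1
      have hA'' : A' = A := by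
        rw [hfAB] at hA'
        simp only [Finset.mem_insert, Finset.mem_singleton] at hA'
        rcases hA' with rfl | rfl
        · rfl
        · omega
      have hB'' : B' = B := by
        rw [hfAB] at hB'
        simp only [Finset.mem_insert, Finset.mem_singleton] at hB'
        rcases hB' with rfl | rfl
        · omega
        · rfl
      subst hA'' hB''
      exact mem_pairSet.mpr ⟨hBIv, hsub, hAc, hBc, hcond⟩
    · intro hp
      obtain ⟨hBIv, hsub, hAc, hBc, hcond⟩ := mem_pairSet.mp hp
      refine ⟨⟨{p.1, p.2}, mk_flag ha hab hbn hsub hBIv hAc hBc⟩, ?_, ?_⟩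
      · exact ⟨p.1, p.2, by simp, by simp, hAc, hBc, hcond⟩
      · exact gmap_eq hab.ne rfl hAc hBc
  have hinj : Set.InjOn (gmap n a b) (Fi n a b i) := by
    intro f hf g hg hfg
    obtain ⟨A, B, hfAB, _, hAc, hBc⟩ := flag_struct hab f
    obtain ⟨A', B', hgAB, _, hA'c, hB'c⟩ := flag_struct hab g
    rw [gmap_eq hab.ne hfAB hAc hBc, gmap_eq hab.ne hgAB hA'c hB'c] at hfg
    obtain ⟨rfl, rfl⟩ := Prod.mk.injEq .. ▸ Prod.ext_iff.mp hfg
    exact Subtype.ext (hfAB.trans hgAB.symm)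
  rw [← Set.ncard_image_of_injOn hinj, himg, Set.ncard_coe_finset]

/- ## minimum helper -/

noncomputable def jmin (A : Finset ℕ) : ℕ := if h : A.Nonempty then A.min' h else 0

lemma jmin_mem {A : Finset ℕ} (h : A.Nonempty) : jmin A ∈ A := by
  rw [jmin, dif_pos h]; exact A.min'_mem h

lemma jmin_le {A : Finset ℕ} {k : ℕ} (hk : k ∈ A) : jmin A ≤ k := by
  rw [jmin, dif_pos ⟨k, hk⟩]; exact A.min'_le k hk

lemma condII_iff {i : ℕ} {A B : Finset ℕ} (h : A.Nonempty) :
    condII i A B ↔ jmin A ≤ i ∧ Iv (jmin A) ⊆ B := by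
  constructor
  · rintro ⟨j, hjA, hjmin, hji, hIv⟩
    have hj : j = jmin A := le_antisymm (hjmin _ (jmin_mem h)) (jmin_le hjA)
    exact ⟨hj ▸ hji, hj ▸ hIv⟩
  · rintro ⟨h1, h2⟩
    exact ⟨jmin A, jmin_mem h, fun k hk => jmin_le hk, h1, h2⟩

/- ## counting the part satisfying (I) but not (II) -/

lemma mem_S1 {n a b i : ℕ} (ha : 0 < a) {p : Finset ℕ × Finset ℕ} :
    (p ∈ pairSet n a b i ∧ ¬ condII i p.1 p.2) ↔
      (p.1 ⊆ p.2 ∧ p.1.card = a ∧ p.2.card = b ∧ Iv i ⊆ p.2 ∧ p.2 ⊆ Iv (n-1) ∧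
        ∀ k ∈ p.1, i < k) := by
  constructor
  · rintro ⟨hp, hnII⟩
    obtain ⟨hBIv, hsub, hAc, hBc, hcond⟩ := mem_pairSet.mp hp
    have hI : condI n i p.2 := by
      rcases hcond with h | h
      · exact h
      · exact absurd h hnII
    refine ⟨hsub, hAc, hBc, hI.1, hI.2, ?_⟩
    intro k hk
    by_contra hki
    push_neg at hki
    have hne : p.1.Nonempty := ⟨k, hk⟩
    apply hnII
    rw [condII_iff hne]
    have h1 : jmin p.1 ≤ i := le_trans (jmin_le hk) hki
    exact ⟨h1, (Iv_subset_Iv h1).trans hI.1⟩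
  · rintro ⟨hsub, hAc, hBc, hIvi, hIvn1, hgt⟩
    have hBIv : p.2 ⊆ Iv n := hIvn1.trans (Iv_subset_Iv (by omega))
    refine ⟨mem_pairSet.mpr ⟨hBIv, hsub, hAc, hBc, Or.inl ⟨hIvi, hIvn1⟩⟩, ?_⟩
    rintro ⟨j, hjA, _, hji, _⟩
    exact absurd hji (by have := hgt j hjA; omega)

lemma card_S1 {n a b i : ℕ} (ha : 0 < a) (hib : i ≤ b) (hin : i ≤ n - 1) :
    ((pairSet n a b i).filter (fun p => ¬ condII i p.1 p.2)).card
      = (n - 1 - i).choose (b - i) * (b - i).choose a := by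
  have hcard : (((Finset.Icc (i+1) (n-1)).powersetCard (b-i)).sigma
      (fun D => D.powersetCard a)).card = (n - 1 - i).choose (b - i) * (b - i).choose a := by
    rw [sigma_powersetCard_card', Nat.card_Icc]
    congr 2
    omega
  rw [← hcard]
  apply Finset.card_nbij' (fun p => (⟨p.2 \ Iv i, p.1⟩ : (_ : Finset ℕ) × Finset ℕ))
    (fun x => (x.2, x.1 ∪ Iv i))
  · intro p hp
    rw [Finset.mem_coe, Finset.mem_filter] at hp
    obtain ⟨hsub, hAc, hBc, hIvi, hIvn1, hgt⟩ := (mem_S1 ha).mp hp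
    rw [Finset.mem_coe, Finset.mem_sigma, Finset.mem_powersetCard, Finset.mem_powersetCard]
    refine ⟨⟨?_, ?_⟩, ?_, hAc⟩
    · intro x hx
      rw [Finset.mem_sdiff, mem_Iv] at hx
      have hx2 := hIvn1 hx.1
      rw [mem_Iv] at hx2
      rw [Finset.mem_Icc]
      omega
    · rw [Finset.card_sdiff_of_subset hIvi, hBc, card_Iv]
    · intro x hx
      rw [Finset.mem_sdiff, mem_Iv]
      exact ⟨hsub hx, fun h => by have := hgt x hx; omega⟩
  · intro x hx
    rw [Finset.mem_coe, Finset.mem_sigma, Finset.mem_powersetCard, Finset.mem_powersetCard] at hx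
    obtain ⟨⟨hD, hDc⟩, hC, hCc⟩ := hx
    have hDmem : ∀ k ∈ x.1, i + 1 ≤ k ∧ k ≤ n - 1 := by
      intro k hk
      have := hD hk
      rw [Finset.mem_Icc] at this
      exact this
    have hdisj : Disjoint x.1 (Iv i) := by
      rw [Finset.disjoint_left]
      intro k hk hk'
      rw [mem_Iv] at hk'
      have := hDmem k hk
      omega
    rw [Finset.mem_coe, Finset.mem_filter]
    apply (mem_S1 ha).mpr
    refine ⟨hC.trans Finset.subset_union_left, hCc, ?_, Finset.subset_union_right, ?_, ?_⟩
    · rw [Finset.card_union_of_disjoint hdisj, hDc, card_Iv]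
      omega
    · intro k hk
      rw [Finset.mem_union, mem_Iv] at hk
      rw [mem_Iv]
      rcases hk with h | h
      · have := hDmem k h; omega
      · omega
    · intro k hk
      have := hDmem k (hC hk)
      omega
  · intro p hp
    rw [Finset.mem_coe, Finset.mem_filter] at hp
    obtain ⟨_, _, _, hIvi, _, _⟩ := (mem_S1 ha).mp hp
    have : p.2 \ Iv i ∪ Iv i = p.2 := by
      rw [Finset.sdiff_union_self_eq_union, Finset.union_eq_left.mpr hIvi]
    rw [Prod.ext_iff]
    exact ⟨rfl, this⟩
  · intro x hx
    rw [Finset.mem_coe, Finset.mem_sigma, Finset.mem_powersetCard, Finset.mem_powersetCard] at hx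
    obtain ⟨⟨hD, hDc⟩, hC, hCc⟩ := hx
    have : (x.1 ∪ Iv i) \ Iv i = x.1 := by
      rw [Finset.union_sdiff_right]
      apply Finset.sdiff_eq_self_of_disjoint
      rw [Finset.disjoint_left]
      intro k hk hk'
      have := hD hk
      rw [Finset.mem_Icc] at this
      rw [mem_Iv] at hk'
      omega
    rw [Sigma.ext_iff]
    exact ⟨this, heq_of_eq rfl⟩

/- ## counting the part satisfying (II) -/

lemma card_S2 {n a b i : ℕ} (ha : 0 < a) (hb : 0 < b) (hab : a + b < n) (hbn : n < 2 * b)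
    (hi : i ≤ 2 * b - n + 1) :
    ((pairSet n a b i).filter (fun p => condII i p.1 p.2)).card
      = (n - b + a - 1).choose (a - 1) * (n.choose (b - a) - (n - i).choose (b - a - i)) := by
  classical
  set T2 : Finset ((_ : ℕ) × (_ : Finset ℕ) × Finset ℕ) :=
    (Finset.Icc 1 i).sigma (fun j => ((Finset.Icc (j+1) n).powersetCard (b - j - (a-1))).sigma
      (fun D => ((Finset.Icc (j+1) n) \ D).powersetCard (a-1))) with hT2
  have hstep : ((pairSet n a b i).filter (fun p => condII i p.1 p.2)).card = T2.card := by
    apply Finset.card_nbij'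
      (fun p => (⟨jmin p.1, p.2 \ (Iv (jmin p.1) ∪ p.1), p.1.erase (jmin p.1)⟩ :
        (_ : ℕ) × (_ : Finset ℕ) × Finset ℕ))
      (fun x => (insert x.1 x.2.2, Iv x.1 ∪ x.2.2 ∪ x.2.1))
    · -- forward membership
      intro p hp
      rw [Finset.mem_coe, Finset.mem_filter] at hp
      obtain ⟨hmem, hII⟩ := hp
      obtain ⟨hBIv, hsub, hAc, hBc, _⟩ := mem_pairSet.mp hmem
      have hne : p.1.Nonempty := Finset.card_pos.mp (by omega)
      obtain ⟨hji, hIvB⟩ := (condII_iff hne).mp hII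
      have hj1 : 1 ≤ jmin p.1 := by
        have h1 := hsub (jmin_mem hne)
        have h2 := hBIv h1
        rw [mem_Iv] at h2
        omega
      have hinter : Iv (jmin p.1) ∩ p.1 = {jmin p.1} := by
        ext x
        rw [Finset.mem_inter, mem_Iv, Finset.mem_singleton]
        constructor
        · rintro ⟨⟨_, hxj⟩, hxA⟩
          have := jmin_le hxA
          omega
        · rintro rfl
          exact ⟨⟨hj1, le_refl _⟩, jmin_mem hne⟩
      have hcup : (Iv (jmin p.1) ∪ p.1).card = jmin p.1 + a - 1 := by
        have := Finset.card_union_add_card_inter (Iv (jmin p.1)) p.1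
        rw [hinter, card_Iv, hAc, Finset.card_singleton] at this
        omega
      have hsubB : Iv (jmin p.1) ∪ p.1 ⊆ p.2 := Finset.union_subset hIvB hsub
      simp only [hT2, Finset.mem_coe, Finset.mem_sigma, Finset.mem_Icc, Finset.mem_powersetCard]
      refine ⟨⟨hj1, hji⟩, ⟨?_, ?_⟩, ?_, ?_⟩
      · intro x hx
        rw [Finset.mem_sdiff, Finset.mem_union, mem_Iv] at hx
        have hxn := hBIv hx.1
        rw [mem_Iv] at hxn
        rw [Finset.mem_Icc]
        push_neg at hx
        have := hx.2.1
        omega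
      · rw [Finset.card_sdiff_of_subset hsubB, hBc, hcup]
        omega
      · intro x hx
        rw [Finset.mem_erase] at hx
        have hxn := hBIv (hsub hx.2)
        rw [mem_Iv] at hxn
        have hmin := jmin_le hx.2
        rw [Finset.mem_sdiff, Finset.mem_Icc]
        refine ⟨⟨by omega, by omega⟩, ?_⟩
        rw [Finset.mem_sdiff, Finset.mem_union]
        exact fun h => h.2 (Or.inr hx.2)
      · rw [Finset.card_erase_of_mem (jmin_mem hne), hAc]
    · -- backward membership
      rintro ⟨j, D, C⟩ hx
      simp only [hT2, Finset.mem_coe, Finset.mem_sigma, Finset.mem_Icc, Finset.mem_powersetCard] at hx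
      obtain ⟨⟨hj1, hji⟩, ⟨hD, hDc⟩, hC, hCc⟩ := hx
      simp only
      have hDmem : ∀ k ∈ D, j + 1 ≤ k ∧ k ≤ n := by
        intro k hk; have := hD hk; rw [Finset.mem_Icc] at this; exact this
      have hCmem : ∀ k ∈ C, (j + 1 ≤ k ∧ k ≤ n) ∧ k ∉ D := by
        intro k hk; have := hC hk
        rw [Finset.mem_sdiff, Finset.mem_Icc] at this; exact this
      have hjC : j ∉ C := fun h => by have := hCmem j h; omega
      have hdisj1 : Disjoint (Iv j) C := by
        rw [Finset.disjoint_left]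
        intro k hk hk'
        rw [mem_Iv] at hk
        have := hCmem k hk'
        omega
      have hdisj2 : Disjoint (Iv j ∪ C) D := by
        rw [Finset.disjoint_left]
        intro k hk hk'
        rw [Finset.mem_union, mem_Iv] at hk
        have := hDmem k hk'
        rcases hk with h | h
        · omega
        · exact (hCmem k h).2 hk'
      have hBc : (Iv j ∪ C ∪ D).card = b := by
        rw [Finset.card_union_of_disjoint hdisj2, Finset.card_union_of_disjoint hdisj1,
          card_Iv, hCc, hDc]
        omega
      have hAB : insert j C ⊆ Iv j ∪ C ∪ D := by
        intro x hx
        rw [Finset.mem_insert] at hx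
        rw [Finset.mem_union, Finset.mem_union, mem_Iv]
        rcases hx with rfl | hx
        · exact Or.inl (Or.inl ⟨hj1, le_refl _⟩)
        · exact Or.inl (Or.inr hx)
      have hBIv : Iv j ∪ C ∪ D ⊆ Iv n := by
        intro x hx
        rw [Finset.mem_union, Finset.mem_union, mem_Iv] at hx
        rw [mem_Iv]
        rcases hx with (h | h) | h
        · omega
        · have := hCmem x h; omega
        · have := hDmem x h; omega
      have hIvsub : Iv j ⊆ Iv j ∪ C ∪ D :=
        fun x hx => Finset.mem_union_left _ (Finset.mem_union_left _ hx)
      rw [Finset.mem_coe, Finset.mem_filter]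
      constructor
      · apply mem_pairSet.mpr
        refine ⟨hBIv, hAB, ?_, hBc, Or.inr ?_⟩
        · rw [Finset.card_insert_of_notMem hjC, hCc]; omega
        · refine ⟨j, Finset.mem_insert_self _ _, ?_, hji, hIvsub⟩
          intro k hk
          rw [Finset.mem_insert] at hk
          rcases hk with rfl | hk
          · exact le_refl _
          · have := hCmem k hk; omega
      · exact ⟨j, Finset.mem_insert_self _ _, fun k hk => by
          rw [Finset.mem_insert] at hk
          rcases hk with rfl | hk
          · exact le_refl _
          · have := hCmem k hk; omega, hji, hIvsub⟩
    · -- left inverse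
      intro p hp
      rw [Finset.mem_coe, Finset.mem_filter] at hp
      obtain ⟨hmem, hII⟩ := hp
      obtain ⟨hBIv, hsub, hAc, hBc, _⟩ := mem_pairSet.mp hmem
      have hne : p.1.Nonempty := Finset.card_pos.mp (by omega)
      obtain ⟨hji, hIvB⟩ := (condII_iff hne).mp hII
      have hA : insert (jmin p.1) (p.1.erase (jmin p.1)) = p.1 :=
        Finset.insert_erase (jmin_mem hne)
      have hj1 : 1 ≤ jmin p.1 := by
        have h1 := hsub (jmin_mem hne)
        have h2 := hBIv h1
        rw [mem_Iv] at h2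
        omega
      have hB : Iv (jmin p.1) ∪ p.1.erase (jmin p.1) ∪ (p.2 \ (Iv (jmin p.1) ∪ p.1)) = p.2 := by
        have h1 : Iv (jmin p.1) ∪ p.1.erase (jmin p.1) = Iv (jmin p.1) ∪ p.1 := by
          ext x
          simp only [Finset.mem_union, Finset.mem_erase, mem_Iv]
          constructor
          · rintro (h | ⟨_, h⟩)
            · exact Or.inl h
            · exact Or.inr h
          · rintro (h | h)
            · exact Or.inl h
            · by_cases hx : x = jmin p.1
              · exact Or.inl (by omega)
              · exact Or.inr ⟨hx, h⟩
        rw [h1]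
        exact Finset.union_sdiff_of_subset (Finset.union_subset hIvB hsub)
      rw [Prod.ext_iff]
      exact ⟨hA, hB⟩
    · -- right inverse
      rintro ⟨j, D, C⟩ hx
      simp only [hT2, Finset.mem_coe, Finset.mem_sigma, Finset.mem_Icc, Finset.mem_powersetCard] at hx
      obtain ⟨⟨hj1, hji⟩, ⟨hD, hDc⟩, hC, hCc⟩ := hx
      simp only
      have hCmem : ∀ k ∈ C, (j + 1 ≤ k ∧ k ≤ n) ∧ k ∉ D := by
        intro k hk; have := hC hk
        rw [Finset.mem_sdiff, Finset.mem_Icc] at this; exact this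
      have hDmem : ∀ k ∈ D, j + 1 ≤ k ∧ k ≤ n := by
        intro k hk; have := hD hk; rw [Finset.mem_Icc] at this; exact this
      have hjC : j ∉ C := fun h => by have := hCmem j h; omega
      have hjmin : jmin (insert j C) = j := by
        have hmem : j ∈ insert j C := Finset.mem_insert_self _ _
        have h1 := jmin_le hmem
        have h2 := jmin_mem ⟨j, hmem⟩
        rw [Finset.mem_insert] at h2
        rcases h2 with h2 | h2
        · omega
        · have := hCmem _ h2; omega
      rw [hjmin]
      have hDeq : (Iv j ∪ C ∪ D) \ (Iv j ∪ insert j C) = D := by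
        ext x
        simp only [Finset.mem_sdiff, Finset.mem_union, Finset.mem_insert, mem_Iv]
        constructor
        · rintro ⟨(h | h) | h, h2⟩
          · exact absurd (Or.inl h) h2
          · exact absurd (Or.inr (Or.inr h)) h2
          · exact h
        · intro h
          refine ⟨Or.inr h, ?_⟩
          rintro (h2 | (h2 | h2))
          · have := hDmem x h; omega
          · have := hDmem x h; omega
          · exact (hCmem x h2).2 h
      have hCeq : (insert j C).erase j = C := Finset.erase_insert hjC
      rw [Sigma.ext_iff]
      refine ⟨rfl, ?_⟩
      rw [heq_eq_eq, Sigma.ext_iff]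
      exact ⟨hDeq, heq_of_eq hCeq⟩
  rw [hstep, hT2, Finset.card_sigma]
  have hterm : ∀ j ∈ Finset.Icc 1 i,
      (((Finset.Icc (j+1) n).powersetCard (b - j - (a-1))).sigma
        (fun D => ((Finset.Icc (j+1) n) \ D).powersetCard (a-1))).card
      = (n - b + a - 1).choose (a - 1) * (n - j).choose ((b - a) + 1 - j) := by
    intro j hj
    rw [Finset.mem_Icc] at hj
    rw [sigma_powersetCard_card, Nat.card_Icc]
    have e1 : n + 1 - (j + 1) = n - j := by omega
    have e2 : b - j - (a - 1) = (b - a) + 1 - j := by omega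
    have e3 : n - j - ((b-a) + 1 - j) = n - b + a - 1 := by omega
    rw [e1, e2, e3, Nat.mul_comm]
  rw [Finset.sum_congr rfl hterm, ← Finset.mul_sum]
  congr 1
  have htel := telescope n (b - a) (by omega) i (by omega)
  omega


/-- the cardinality of `F_i(n,a,b)` for `0 ≤ i ≤ 2b - n + 1`. -/
theorem Fi_card (n a b : ℕ) (ha : 0 < a) (hb : 0 < b)
    (hab : a + b < n) (hbn : n < 2 * b) (i : ℕ) (hi : i ≤ 2 * b - n + 1) :
    (Fi n a b i).ncard =
      Nat.choose (n - 1 - i) (b - i) * Nat.choose (b - i) a +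
      Nat.choose (n - b + a - 1) (a - 1) *
        (Nat.choose n (b - a) - Nat.choose (n - i) (b - a - i)) := by
  have hab' : a < b := by omega
  have hbn' : b < n := by omega
  rw [ncard_Fi ha hab' hbn']
  rw [← Finset.card_filter_add_card_filter_not (p := fun p => condII i p.1 p.2)]
  rw [card_S1 ha (by omega) (by omega), card_S2 ha hb hab hbn hi]
  exact Nat.add_comm _ _
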